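/- For every k > 0 and all x ∈ ℝ, |H_k(x)| ≤ 2/k, where H_k is the piecewise function defined by H_k(x) = 1/(x−k) on (−∞,0], H_k(x) = −x³/(2k⁴) + 7x²/(4k³) − x/k² − 1/k on (0,2k], and H_k(x) = 0 on (2k,∞). -/

import Mathlib

/-!
On `(-∞, 0]` the bound is `|1 / (x - k)| ≤ 1 / k`. The cubic piece factors as
`-(x - 2k)² (2x + k) / (4k⁴)` (its double root at `2k` is what glues it `C¹` to the zero piece),
and on `[0, 2k]` the numerator `(x - 2k)² (2x + k)` lies between `0` and `8k³`.
-/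

/-- The piecewise transformation function `H_k` of the singularity-minimizing
construction. -/
noncomputable def Hk (k : ℝ) (x : ℝ) : ℝ :=
  if x ≤ 0 then 1 / (x - k)
  else if x ≤ 2 * k then -x ^ 3 / (2 * k ^ 4) + 7 * x ^ 2 / (4 * k ^ 3) - x / k ^ 2 - 1 / k
  else 0

lemma abs_one_div_sub_le_one_div {k x : ℝ} (hk : 0 < k) (hx : x ≤ 0) :
    |1 / (x - k)| ≤ 1 / k := by
  rw [abs_div, abs_one, abs_of_neg (by linarith : x - k < 0), neg_sub]
  exact one_div_le_one_div_of_le hk (by linarith)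

lemma cubic_piece_eq {k : ℝ} (hk : k ≠ 0) (x : ℝ) :
    -x ^ 3 / (2 * k ^ 4) + 7 * x ^ 2 / (4 * k ^ 3) - x / k ^ 2 - 1 / k =
      -((x - 2 * k) ^ 2 * (2 * x + k)) / (4 * k ^ 4) := by
  field_simp
  ring

lemma cubic_piece_numerator_le {k x : ℝ} (hx₀ : 0 ≤ x) (hx : x ≤ 2 * k) :
    (x - 2 * k) ^ 2 * (2 * x + k) ≤ 8 * k ^ 3 := by
  nlinarith [mul_nonneg hx₀ (sub_nonneg.2 hx), mul_nonneg (mul_nonneg hx₀ hx₀) (sub_nonneg.2 hx)]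

lemma abs_cubic_piece_le {k x : ℝ} (hk : 0 < k) (hx₀ : 0 ≤ x) (hx : x ≤ 2 * k) :
    |-x ^ 3 / (2 * k ^ 4) + 7 * x ^ 2 / (4 * k ^ 3) - x / k ^ 2 - 1 / k| ≤ 2 / k := by
  have hnum : 0 ≤ (x - 2 * k) ^ 2 * (2 * x + k) := mul_nonneg (sq_nonneg _) (by linarith)
  rw [cubic_piece_eq hk.ne', abs_div, abs_neg, abs_of_nonneg hnum, abs_of_pos (by positivity)]
  calc (x - 2 * k) ^ 2 * (2 * x + k) / (4 * k ^ 4)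
      ≤ 8 * k ^ 3 / (4 * k ^ 4) := by gcongr ?_ / _; exact cubic_piece_numerator_le hx₀ hx
    _ = 2 / k := by field_simp; ring

/-- For every `k > 0` and all real `x`, `|H_k x| ≤ 2 / k`. -/
theorem stmt16 (k : ℝ) (hk : 0 < k) (x : ℝ) : |Hk k x| ≤ 2 / k := by
  unfold Hk
  split_ifs with hx₀ hx
  · exact (abs_one_div_sub_le_one_div hk hx₀).trans (by gcongr; norm_num)
  · exact abs_cubic_piece_le hk (not_le.1 hx₀).le hx
  · rw [abs_zero]
    positivity
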